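/- Let P be a finite poset with a longest chain C = {c_1 ≺ ⋯ ≺ c_k}. If {u,v} is an incomparable pair of P \ C such that no element of C is incomparable to both u and v, then max{s_u, s_v} = min{l_u, l_v} − 1, and moreover s_u = l_v − 1 or s_v = l_u − 1; i.e., there exists i with u ∈ S_i and v ∈ L_{i+1}, or v ∈ S_i and u ∈ L_{i+1}. -/
import Mathlib


open Finset

variable {α : Type*}

/-- `u ≼ cᵢ` with the virtual conventions: the virtual element `c_{k+1}` lies above
everything (and `c₀` below everything, so `u ≼ c₀` never holds). -/
def leC [PartialOrder α] (k : ℕ) (c : ℕ → α) (u : α) (i : ℕ) : Prop :=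
  i = k + 1 ∨ (1 ≤ i ∧ i ≤ k ∧ u ≤ c i)

/-- `cᵢ ≼ u` with the virtual conventions: `c₀` lies below everything. -/
def cLe [PartialOrder α] (k : ℕ) (c : ℕ → α) (u : α) (i : ℕ) : Prop :=
  i = 0 ∨ (1 ≤ i ∧ i ≤ k ∧ c i ≤ u)

/-- `s_u = max { i : cᵢ ≼ u }`. -/
noncomputable def sIdx [PartialOrder α] (k : ℕ) (c : ℕ → α) (u : α) : ℕ :=
  sSup {i | cLe k c u i}

/-- `l_u = min { i : u ≼ cᵢ }`. -/
noncomputable def lIdx [PartialOrder α] (k : ℕ) (c : ℕ → α) (u : α) : ℕ :=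
  sInf {i | leC k c u i}

/-- `u ∈ Pᵢ`, i.e. `u ⋠ cᵢ` and `u ⋡ c_{i+1}`. -/
def memP [PartialOrder α] (k : ℕ) (c : ℕ → α) (i : ℕ) (u : α) : Prop :=
  ¬ leC k c u i ∧ ¬ cLe k c u (i + 1)

/-- `u` is incomparable with `cᵢ` (virtual elements are comparable to everything). -/
def incompC [PartialOrder α] (k : ℕ) (c : ℕ → α) (u : α) (i : ℕ) : Prop :=
  ¬ leC k c u i ∧ ¬ cLe k c u i

/-- The underlying set `C = {c₁, …, c_k}` of the chain. -/
def chainSet (k : ℕ) (c : ℕ → α) : Set α := c '' (Set.Icc 1 k)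

/-- `c₁ ≺ c₂ ≺ ⋯ ≺ c_k` is a chain of maximum cardinality in the finite poset `α`. -/
def IsLongestChain [PartialOrder α] [Fintype α] (k : ℕ) (c : ℕ → α) : Prop :=
  (∀ i j, 1 ≤ i → i < j → j ≤ k → c i < c j) ∧
  ∀ D : Finset α, IsChain (· ≤ ·) (D : Set α) → D.card ≤ k

section Aux

variable [PartialOrder α]

lemma cLe_bddAbove (k : ℕ) (c : ℕ → α) (u : α) : BddAbove {i | cLe k c u i} :=
  ⟨k, fun i hi => hi.elim (fun h => h ▸ Nat.zero_le k) (fun h => h.2.1)⟩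

lemma sIdx_mem (k : ℕ) (c : ℕ → α) (u : α) : cLe k c u (sIdx k c u) :=
  Nat.sSup_mem ⟨0, Or.inl rfl⟩ (cLe_bddAbove k c u)

lemma le_sIdx {k : ℕ} {c : ℕ → α} {u : α} {i : ℕ} (h : cLe k c u i) : i ≤ sIdx k c u :=
  le_csSup (cLe_bddAbove k c u) h

lemma sIdx_le_k (k : ℕ) (c : ℕ → α) (u : α) : sIdx k c u ≤ k :=
  (sIdx_mem k c u).elim (fun h => h ▸ Nat.zero_le k) (fun h => h.2.1)

lemma lIdx_mem (k : ℕ) (c : ℕ → α) (u : α) : leC k c u (lIdx k c u) := by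
  have h : lIdx k c u ∈ {i | leC k c u i} :=
    Nat.sInf_mem ⟨k + 1, Or.inl (rfl : (k + 1 : ℕ) = k + 1)⟩
  exact h

lemma lIdx_le {k : ℕ} {c : ℕ → α} {u : α} {i : ℕ} (h : leC k c u i) : lIdx k c u ≤ i :=
  Nat.sInf_le h

lemma lIdx_le_succ_k (k : ℕ) (c : ℕ → α) (u : α) : lIdx k c u ≤ k + 1 :=
  lIdx_le (Or.inl rfl)

lemma one_le_lIdx (k : ℕ) (c : ℕ → α) (u : α) : 1 ≤ lIdx k c u := by
  rcases lIdx_mem k c u with h | h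
  · omega
  · exact h.1

/-- Monotone version of the chain hypothesis. -/
lemma chain_mono {k : ℕ} {c : ℕ → α}
    (hch : ∀ i j, 1 ≤ i → i < j → j ≤ k → c i < c j)
    {i j : ℕ} (h1 : 1 ≤ i) (h2 : i ≤ j) (h3 : j ≤ k) : c i ≤ c j := by
  rcases eq_or_lt_of_le h2 with rfl | hlt
  · exact le_refl _
  · exact (hch i j h1 hlt h3).le

/-- If `¬ v ≤ u` then `s_u < l_v`. -/
lemma sIdx_lt_lIdx_of_not_le {k : ℕ} {c : ℕ → α}
    (hch : ∀ i j, 1 ≤ i → i < j → j ≤ k → c i < c j)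
    {u v : α} (h : ¬ v ≤ u) : sIdx k c u < lIdx k c v := by
  by_contra hle
  push_neg at hle
  have hs := sIdx_mem k c u
  have hl := lIdx_mem k c v
  have hsk := sIdx_le_k k c u
  rcases hs with h0 | hs
  · have := one_le_lIdx k c v; omega
  rcases hl with hk1 | hl
  · omega
  have hcc : c (lIdx k c v) ≤ c (sIdx k c u) :=
    chain_mono hch hl.1 hle hs.2.1
  exact h (hl.2.2.trans (hcc.trans hs.2.2))

/-- Since the chain has maximum cardinality, `l_u ≥ s_u + 2` for `u ∉ C`. -/
lemma sIdx_add_two_le_lIdx [Fintype α] {k : ℕ} {c : ℕ → α}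
    (hC : IsLongestChain k c) {u : α} (hu : u ∉ chainSet k c) :
    sIdx k c u + 2 ≤ lIdx k c u := by
  classical
  obtain ⟨hch, hmax⟩ := hC
  set s := sIdx k c u with hsdef
  set l := lIdx k c u with hldef
  have hsk : s ≤ k := sIdx_le_k k c u
  have hl1 : 1 ≤ l := one_le_lIdx k c u
  have hsmem := sIdx_mem k c u
  have hlmem := lIdx_mem k c u
  -- first : s < l
  have hsl : s < l := by
    by_contra hle
    push_neg at hle
    rcases hsmem with h0 | hs
    · omega
    rcases hlmem with hk1 | hl
    · omega
    rcases eq_or_lt_of_le hle with he | hlt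
    · refine hu ⟨l, ⟨hl.1, hl.2.1⟩, le_antisymm ?_ hl.2.2⟩
      rw [he]; exact hs.2.2
    · exact absurd ((hl.2.2.trans_lt (hch l s hl.1 hlt hs.2.1)).trans_le hs.2.2)
        (lt_irrefl u)
  by_contra hcon
  have hls : l = s + 1 := by omega
  -- build a longer chain
  have hinj : Set.InjOn c (Set.Icc 1 k) := by
    intro i hi j hj hij
    by_contra hne
    rcases lt_or_ge i j with hlt | hge
    · exact absurd (hij ▸ hch i j hi.1 hlt hj.2) (lt_irrefl _)
    · have : j < i := by omega
      exact absurd (hij ▸ hch j i hj.1 this hi.2) (lt_irrefl _)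
  have hunotin : u ∉ (Finset.Icc 1 k).image c := by
    intro hmem
    obtain ⟨i, hi, hci⟩ := Finset.mem_image.mp hmem
    exact hu ⟨i, by simpa using Finset.mem_Icc.mp hi, hci⟩
  set D : Finset α := (Finset.Icc 1 k).image c ∪ {u} with hDdef
  have hcard : D.card = k + 1 := by
    rw [hDdef, Finset.card_union_of_disjoint (by simpa using hunotin),
      Finset.card_image_of_injOn (by simpa using hinj), Nat.card_Icc]
    simp
  -- comparability of u with every chain element
  have hcomp : ∀ i, 1 ≤ i → i ≤ k → c i ≤ u ∨ u ≤ c i := by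
    intro i hi1 hik
    rcases le_or_gt i s with his | hls'
    · left
      rcases hsmem with h0 | hs
      · omega
      · exact (chain_mono hch hi1 his hs.2.1).trans hs.2.2
    · right
      have hli : l ≤ i := by omega
      rcases hlmem with hk1 | hl
      · omega
      · exact hl.2.2.trans (chain_mono hch hl.1 hli hik)
  have hchain : IsChain (· ≤ ·) (D : Set α) := by
    intro x hx y hy hxy
    simp only [hDdef, Finset.coe_union, Finset.coe_image, Finset.coe_singleton,
      Set.mem_union, Set.mem_image, Set.mem_singleton_iff] at hx hy
    rcases hx with ⟨i, hi, rfl⟩ | rfl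
    · rcases hy with ⟨j, hj, rfl⟩ | rfl
      · simp only [Finset.mem_coe, Finset.mem_Icc] at hi hj
        rcases lt_or_ge i j with hlt | hge
        · exact Or.inl (hch i j hi.1 hlt hj.2).le
        · rcases eq_or_lt_of_le hge with rfl | hlt
          · exact absurd rfl hxy
          · exact Or.inr (hch j i hj.1 hlt hi.2).le
      · simp only [Finset.mem_coe, Finset.mem_Icc] at hi
        exact hcomp i hi.1 hi.2
    · rcases hy with ⟨j, hj, rfl⟩ | rfl
      · simp only [Finset.mem_coe, Finset.mem_Icc] at hj
        exact (hcomp j hj.1 hj.2).symm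
      · exact absurd rfl hxy
  have := hmax D hchain
  omega

end Aux

/-- If `{u, v}` is an incomparable pair of `P \ C` such that no element of `C` is
incomparable with both `u` and `v`, then `max{s_u, s_v} = min{l_u, l_v} - 1`, and
`s_u = l_v - 1` or `s_v = l_u - 1`; i.e. there is an index `i` with `u ∈ Sᵢ` and
`v ∈ L_{i+1}`, or `v ∈ Sᵢ` and `u ∈ L_{i+1}`. -/
theorem stmt_16 [PartialOrder α] [Fintype α] (k : ℕ) (c : ℕ → α)
    (hC : IsLongestChain k c) (u v : α)
    (hu : u ∉ chainSet k c) (hv : v ∉ chainSet k c)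
    (huv : ¬ u ≤ v ∧ ¬ v ≤ u)
    (hno : ¬ ∃ i, 1 ≤ i ∧ i ≤ k ∧ incompC k c u i ∧ incompC k c v i) :
    max (sIdx k c u) (sIdx k c v) = min (lIdx k c u) (lIdx k c v) - 1 ∧
    (sIdx k c u = lIdx k c v - 1 ∨ sIdx k c v = lIdx k c u - 1) ∧
    ∃ i, (sIdx k c u = i ∧ lIdx k c v = i + 1) ∨ (sIdx k c v = i ∧ lIdx k c u = i + 1) := by
  have hch := hC.1
  set su := sIdx k c u with hsu
  set sv := sIdx k c v with hsv
  set lu := lIdx k c u with hlu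
  set lv := lIdx k c v with hlv
  have h1 : su < lv := sIdx_lt_lIdx_of_not_le hch huv.2
  have h2 : sv < lu := sIdx_lt_lIdx_of_not_le hch huv.1
  have h3 : su + 2 ≤ lu := sIdx_add_two_le_lIdx hC hu
  have h4 : sv + 2 ≤ lv := sIdx_add_two_le_lIdx hC hv
  have h5 : lu ≤ k + 1 := lIdx_le_succ_k k c u
  have h6 : lv ≤ k + 1 := lIdx_le_succ_k k c v
  have hbet : ¬ (max su sv + 1 < min lu lv) := by
    intro hlt
    apply hno
    refine ⟨max su sv + 1, by omega, by omega, ⟨?_, ?_⟩, ⟨?_, ?_⟩⟩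
    · intro h; have := lIdx_le h; omega
    · intro h; have := le_sIdx h; omega
    · intro h; have := lIdx_le h; omega
    · intro h; have := le_sIdx h; omega
  have hmain : su = lv - 1 ∨ sv = lu - 1 := by omega
  refine ⟨by omega, hmain, ?_⟩
  rcases hmain with h | h
  · exact ⟨su, Or.inl ⟨rfl, by omega⟩⟩
  · exact ⟨sv, Or.inr ⟨rfl, by omega⟩⟩
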